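/- Impossibility theorem, part 3 (Features 2 and 3 exclude Feature 1): Let H_W and H_S be Hermitian matrices on ℂ^{d_W} and ℂ^{d_S}, kT > 0, and for each x in a finite index set X with |X| = d_S let φ̃_x ∈ ℂ^{d_S} be a unit vector and U_x a unitary on ℂ^{d_W} ⊗ ℂ^{d_S} with [U_x, H_W ⊗ 1 + 1 ⊗ H_S] = 0. Let ρ_W be a density matrix on ℂ^{d_W}, set ρ'_{W,x} := tr₂[U_x(ρ_W ⊗ |φ̃_x⟩⟨φ̃_x|)U_x†] and W_x := F_{H_W}(ρ'_{W,x}) − F_{H_W}(ρ_W). If S(ρ'_{W,x}) = S(ρ_W) and W_x > 0 for all x ∈ X, then ⟨φ̃_x, H_S φ̃_x⟩ > λ_min(H_S) for every x ∈ X; in particular the family {φ̃_x}_{x∈X} is not an orthonormal basis of ℂ^{d_S} consisting of eigenvectors of H_S. -/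

import Mathlib

/-! Since `U` commutes with `H_W ⊗ 1 + 1 ⊗ H_S`, the total energy is conserved. With the
weight's entropy unchanged, positive work means the weight's energy went up, so the system's
energy went down; as the system's final energy is at least `λ_min(H_S)`, its initial energy
`⟨φ̃, H_S φ̃⟩` lies strictly above `λ_min(H_S)`. If the `φ̃_x` formed an orthonormal eigenbasis
of `H_S`, every eigenvalue of `H_S`, in particular `λ_min(H_S)`, would be one of the
`⟨φ̃_x, H_S φ̃_x⟩`. -/

open Matrix
open scoped Kronecker Matrix ComplexOrder

noncomputable section

/-- A density matrix: positive semidefinite with unit trace. -/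
def IsDensityMatrix {n : Type*} [Fintype n] (ρ : Matrix n n ℂ) : Prop :=
  ρ.PosSemidef ∧ ρ.trace = 1

/-- von Neumann entropy `S(ρ) = -∑ λᵢ log λᵢ` (junk value 0 if not Hermitian). -/
noncomputable def vnEntropy {n : Type*} [Fintype n] [DecidableEq n]
    (ρ : Matrix n n ℂ) : ℝ :=
  if h : ρ.IsHermitian then -∑ i, (h.eigenvalues i) * Real.log (h.eigenvalues i) else 0

/-- Non-equilibrium free energy `F(ρ) = tr(Hρ) - kT S(ρ)`. -/
noncomputable def freeEnergy {n : Type*} [Fintype n] [DecidableEq n]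
    (kT : ℝ) (H ρ : Matrix n n ℂ) : ℝ :=
  (Matrix.trace (H * ρ)).re - kT * vnEntropy ρ

/-- Least eigenvalue of a Hermitian matrix (junk value 0 if not Hermitian). -/
noncomputable def lambdaMin {n : Type*} [Fintype n] [DecidableEq n]
    (H : Matrix n n ℂ) : ℝ :=
  if h : H.IsHermitian then ⨅ i, h.eigenvalues i else 0

/-- Partial trace over the second tensor factor. -/
def ptrace2 {m n : Type*} [Fintype n]
    (σ : Matrix (m × n) (m × n) ℂ) : Matrix m m ℂ :=
  fun i j => ∑ k, σ (i, k) (j, k)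

/-- Partial trace over the first tensor factor. -/
def ptrace1 {m n : Type*} [Fintype m]
    (σ : Matrix (m × n) (m × n) ℂ) : Matrix n n ℂ :=
  fun k l => ∑ i, σ (i, k) (i, l)

/-- Outer product `|v⟩⟨v|`. -/
def outer {n : Type*} (v : n → ℂ) : Matrix n n ℂ :=
  Matrix.vecMulVec v (star v)

/-- Kronecker product of vectors. -/
def kronVec {m n : Type*} (v : m → ℂ) (w : n → ℂ) : m × n → ℂ :=
  fun p => v p.1 * w p.2

namespace Matrix

lemma one_kronecker_sub_smul_one {m n : Type*} [DecidableEq m] [DecidableEq n]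
    (B : Matrix n n ℂ) (c : ℂ) : (1 : Matrix m m ℂ) ⊗ₖ (B - c • 1) = 1 ⊗ₖ B - c • 1 := by
  ext ⟨i, k⟩ ⟨j, l⟩
  by_cases h : i = j <;> simp [one_apply, h, mul_sub]

variable {𝕜 n : Type*} [RCLike 𝕜] [Fintype n]

lemma trace_mul_unitary_conj_of_commute {R : Type*} [CommRing R] [StarRing R]
    [DecidableEq n] {H U : Matrix n n R} (hU : U ∈ unitaryGroup n R) (hHU : U * H = H * U)
    (ρ : Matrix n n R) : (H * (U * ρ * Uᴴ)).trace = (H * ρ).trace := by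
  rw [← Matrix.mul_assoc, ← Matrix.mul_assoc, ← hHU, Matrix.mul_assoc, Matrix.mul_assoc,
    trace_mul_comm, Matrix.mul_assoc, Matrix.mul_assoc ρ, ← star_eq_conjTranspose,
    Unitary.star_mul_self_of_mem hU, Matrix.mul_one]

open scoped MatrixOrder in
lemma PosSemidef.trace_mul_nonneg {A B : Matrix n n 𝕜} (hA : A.PosSemidef) (hB : B.PosSemidef) :
    0 ≤ (A * B).trace := by
  classical
  obtain ⟨C, rfl⟩ := CStarAlgebra.nonneg_iff_eq_star_mul_self.mp hB.nonneg
  rw [star_eq_conjTranspose, ← Matrix.mul_assoc, trace_mul_comm, ← Matrix.mul_assoc]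
  exact (hA.mul_mul_conjTranspose_same C).trace_nonneg

lemma IsHermitian.posSemidef_sub_smul_one [DecidableEq n] {H : Matrix n n 𝕜}
    (hH : H.IsHermitian) {c : ℝ} (hc : ∀ i, c ≤ hH.eigenvalues i) :
    (H - (c : 𝕜) • 1).PosSemidef := by
  set U : Matrix n n 𝕜 := (hH.eigenvectorUnitary : Matrix n n 𝕜)
  have hUU : U * Uᴴ = 1 := by
    simpa [U, star_eq_conjTranspose] using (mem_unitaryGroup_iff).mp hH.eigenvectorUnitary.2
  have hdiag : diagonal (fun i ↦ ((hH.eigenvalues i - c : ℝ) : 𝕜))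
      = diagonal (RCLike.ofReal ∘ hH.eigenvalues) - (c : 𝕜) • 1 := by
    rw [smul_one_eq_diagonal, diagonal_sub]
    congr 1
    ext i
    simp
  have hshift : H - (c : 𝕜) • 1
      = U * diagonal (fun i ↦ ((hH.eigenvalues i - c : ℝ) : 𝕜)) * Uᴴ := by
    rw [hdiag, Matrix.mul_sub, Matrix.sub_mul, Matrix.mul_smul, Matrix.mul_one, Matrix.smul_mul,
      hUU]
    conv_lhs => rw [hH.spectral_theorem]
    rfl
  rw [hshift]
  refine PosSemidef.mul_mul_conjTranspose_same ?_ U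
  simpa [posSemidef_diagonal_iff, RCLike.ofReal_nonneg, sub_nonneg] using hc

end Matrix

section LambdaMin

variable {n : Type*} [Fintype n] [DecidableEq n] {H : Matrix n n ℂ}

lemma Matrix.IsHermitian.lambdaMin_eq (hH : H.IsHermitian) :
    lambdaMin H = ⨅ i, hH.eigenvalues i :=
  dif_pos hH

lemma Matrix.IsHermitian.lambdaMin_le_eigenvalues (hH : H.IsHermitian) (i : n) :
    lambdaMin H ≤ hH.eigenvalues i :=
  hH.lambdaMin_eq ▸ ciInf_le (Finite.bddBelow_range _) i

lemma Matrix.IsHermitian.exists_eigenvalues_eq_lambdaMin [Nonempty n] (hH : H.IsHermitian) :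
    ∃ i, hH.eigenvalues i = lambdaMin H := by
  obtain ⟨i, hi⟩ := Finite.exists_min hH.eigenvalues
  exact ⟨i, le_antisymm (hH.lambdaMin_eq ▸ le_ciInf hi) (hH.lambdaMin_le_eigenvalues i)⟩

lemma Matrix.IsHermitian.posSemidef_sub_lambdaMin_smul_one (hH : H.IsHermitian) :
    (H - (lambdaMin H : ℂ) • 1).PosSemidef :=
  hH.posSemidef_sub_smul_one hH.lambdaMin_le_eigenvalues

lemma Matrix.IsHermitian.hasEigenvalue_lambdaMin [Nonempty n] (hH : H.IsHermitian) :
    Module.End.HasEigenvalue (toLin' H) (lambdaMin H : ℂ) := by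
  obtain ⟨i, hi⟩ := hH.exists_eigenvalues_eq_lambdaMin
  refine Module.End.hasEigenvalue_of_hasEigenvector (x := ⇑(hH.eigenvectorBasis i)) ⟨?_, ?_⟩
  · rw [Module.End.mem_eigenspace_iff, toLin'_apply, hH.mulVec_eigenvectorBasis, ← hi,
      Complex.coe_smul]
  · simpa using hH.eigenvectorBasis.orthonormal.ne_zero i

end LambdaMin

section DensityMatrix

variable {m n : Type*} [Fintype m] [Fintype n]

lemma isDensityMatrix_outer {v : n → ℂ} (hv : star v ⬝ᵥ v = 1) : IsDensityMatrix (outer v) :=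
  ⟨posSemidef_vecMulVec_self_star v, by
    simpa [outer, Matrix.trace, vecMulVec_apply, dotProduct, mul_comm] using hv⟩

lemma IsDensityMatrix.kronecker {ρ : Matrix m m ℂ} {σ : Matrix n n ℂ} (hρ : IsDensityMatrix ρ)
    (hσ : IsDensityMatrix σ) : IsDensityMatrix (ρ ⊗ₖ σ) :=
  ⟨hρ.1.kronecker hσ.1, by rw [trace_kronecker, hρ.2, hσ.2, mul_one]⟩

lemma IsDensityMatrix.unitary_conj [DecidableEq n] {ρ : Matrix n n ℂ} (hρ : IsDensityMatrix ρ)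
    {U : Matrix n n ℂ} (hU : U ∈ unitaryGroup n ℂ) : IsDensityMatrix (U * ρ * Uᴴ) :=
  ⟨hρ.1.mul_mul_conjTranspose_same U, by
    rw [trace_mul_cycle, ← star_eq_conjTranspose, Unitary.star_mul_self_of_mem hU, one_mul, hρ.2]⟩

lemma IsDensityMatrix.le_re_trace_mul [DecidableEq n] {ρ A : Matrix n n ℂ}
    (hρ : IsDensityMatrix ρ) {c : ℝ} (hA : (A - (c : ℂ) • 1).PosSemidef) :
    c ≤ (A * ρ).trace.re := by
  have h := Complex.nonneg_iff.mp (hA.trace_mul_nonneg hρ.1)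
  rw [Matrix.sub_mul, trace_sub, smul_mul_assoc, Matrix.one_mul, trace_smul, hρ.2] at h
  simpa [sub_nonneg] using h.1

end DensityMatrix

section Energy

variable {m n : Type*} [Fintype m] [Fintype n]

lemma trace_kronecker_one_mul [DecidableEq n] (A : Matrix m m ℂ) (σ : Matrix (m × n) (m × n) ℂ) :
    ((A ⊗ₖ (1 : Matrix n n ℂ)) * σ).trace = (A * ptrace2 σ).trace := by
  simp only [Matrix.trace, Matrix.diag, Matrix.mul_apply, ptrace2, kroneckerMap_apply,
    Fintype.sum_prod_type, Matrix.one_apply, mul_ite, mul_one, mul_zero, ite_mul, zero_mul,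
    Finset.sum_ite_eq, Finset.mem_univ, if_true, Finset.mul_sum]
  exact Finset.sum_congr rfl fun i _ => Finset.sum_comm

lemma trace_mul_outer (B : Matrix n n ℂ) (v : n → ℂ) :
    (B * outer v).trace = star v ⬝ᵥ B *ᵥ v := by
  simp only [Matrix.trace, Matrix.diag, Matrix.mul_apply, outer, vecMulVec_apply,
    dotProduct, mulVec, Pi.star_apply, Finset.mul_sum]
  exact Finset.sum_congr rfl fun i _ => Finset.sum_congr rfl fun j _ => by ring

lemma trace_kronecker_add_mul_kronecker [DecidableEq m] [DecidableEq n]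
    (A ρ : Matrix m m ℂ) (B σ : Matrix n n ℂ) (hρ : ρ.trace = 1) (hσ : σ.trace = 1) :
    ((A ⊗ₖ (1 : Matrix n n ℂ) + (1 : Matrix m m ℂ) ⊗ₖ B) * (ρ ⊗ₖ σ)).trace
      = (A * ρ).trace + (B * σ).trace := by
  rw [Matrix.add_mul, trace_add, ← mul_kronecker_mul, ← mul_kronecker_mul, trace_kronecker,
    trace_kronecker, Matrix.one_mul, Matrix.one_mul, hρ, hσ, mul_one, one_mul]

end Energy

lemma Module.End.exists_eq_of_hasEigenvalue_of_basis {K V ι : Type*} [Field K] [AddCommGroup V]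
    [Module K V] [Fintype ι] [DecidableEq ι] (b : Module.Basis ι K V) {f : Module.End K V}
    {μ : ι → K} (hb : ∀ i, f (b i) = μ i • b i) {c : K} (hc : f.HasEigenvalue c) :
    ∃ i, μ i = c := by
  have hf : f = toLin b b (diagonal μ) := b.ext fun i ↦ by
    simp [hb, toLin_self, diagonal_apply, ite_smul]
  exact (hasEigenvalue_toLin_diagonal_iff μ b).mp (hf ▸ hc)

lemma linearIndependent_of_star_dotProduct_eq_ite {R n ι : Type*} [CommRing R] [StarRing R]
    [Fintype n] [Fintype ι] [DecidableEq ι] {v : ι → n → R}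
    (hv : ∀ i j, star (v i) ⬝ᵥ v j = if i = j then 1 else 0) : LinearIndependent R v := by
  refine Fintype.linearIndependent_iff.mpr fun g hg i ↦ ?_
  simpa [dotProduct_sum, dotProduct_smul, hv] using congrArg (star (v i) ⬝ᵥ ·) hg

theorem lambdaMin_lt_of_work_pos {dW dS : Type*} [Fintype dW] [DecidableEq dW] [Fintype dS]
    [DecidableEq dS] {HW : Matrix dW dW ℂ} {HS : Matrix dS dS ℂ} (hHS : HS.IsHermitian) {kT : ℝ}
    {φ : dS → ℂ} (hφ : star φ ⬝ᵥ φ = 1) {U : Matrix (dW × dS) (dW × dS) ℂ}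
    (hU : U ∈ unitaryGroup (dW × dS) ℂ)
    (hUcomm : U * (HW ⊗ₖ (1 : Matrix dS dS ℂ) + (1 : Matrix dW dW ℂ) ⊗ₖ HS)
      = (HW ⊗ₖ (1 : Matrix dS dS ℂ) + (1 : Matrix dW dW ℂ) ⊗ₖ HS) * U)
    {ρW : Matrix dW dW ℂ} (hρW : IsDensityMatrix ρW)
    (hS : vnEntropy (ptrace2 (U * (ρW ⊗ₖ outer φ) * Uᴴ)) = vnEntropy ρW)
    (hW : 0 < freeEnergy kT HW (ptrace2 (U * (ρW ⊗ₖ outer φ) * Uᴴ)) - freeEnergy kT HW ρW) :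
    lambdaMin HS < (star φ ⬝ᵥ HS *ᵥ φ).re := by
  set σ := U * (ρW ⊗ₖ outer φ) * Uᴴ
  have hσ : IsDensityMatrix σ := (hρW.kronecker (isDensityMatrix_outer hφ)).unitary_conj hU
  have hbalance : (HW * ptrace2 σ).trace + (((1 : Matrix dW dW ℂ) ⊗ₖ HS) * σ).trace
      = (HW * ρW).trace + star φ ⬝ᵥ HS *ᵥ φ := by
    rw [← trace_kronecker_one_mul, ← trace_add, ← Matrix.add_mul,
      trace_mul_unitary_conj_of_commute hU hUcomm, trace_kronecker_add_mul_kronecker _ _ _ _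
        hρW.2 (isDensityMatrix_outer hφ).2, trace_mul_outer]
  have hwork : (HW * ρW).trace.re < (HW * ptrace2 σ).trace.re := by
    rw [freeEnergy, freeEnergy, hS] at hW
    linarith
  have hsystem : lambdaMin HS ≤ (((1 : Matrix dW dW ℂ) ⊗ₖ HS) * σ).trace.re := by
    refine hσ.le_re_trace_mul ?_
    rw [← one_kronecker_sub_smul_one]
    exact PosSemidef.one.kronecker hHS.posSemidef_sub_lambdaMin_smul_one
  have := congrArg Complex.re hbalance
  simp only [Complex.add_re] at this
  linarith

theorem features_two_three_exclude_one_general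
    {dW dS : ℕ} {X : Type*} [Fintype X] [DecidableEq X]
    (hdS : 0 < dS)
    (HW : Matrix (Fin dW) (Fin dW) ℂ) (HS : Matrix (Fin dS) (Fin dS) ℂ)
    (hHS : HS.IsHermitian)
    (kT : ℝ)
    (φt : X → (Fin dS → ℂ))
    (hcard : Fintype.card X = dS)
    (hφt : ∀ x, star (φt x) ⬝ᵥ φt x = 1)
    (U : X → Matrix (Fin dW × Fin dS) (Fin dW × Fin dS) ℂ)
    (hU : ∀ x, U x ∈ Matrix.unitaryGroup (Fin dW × Fin dS) ℂ)
    (hUcomm : ∀ x, U x * (HW ⊗ₖ (1 : Matrix (Fin dS) (Fin dS) ℂ)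
        + (1 : Matrix (Fin dW) (Fin dW) ℂ) ⊗ₖ HS)
      = (HW ⊗ₖ (1 : Matrix (Fin dS) (Fin dS) ℂ)
        + (1 : Matrix (Fin dW) (Fin dW) ℂ) ⊗ₖ HS) * U x)
    (ρW : Matrix (Fin dW) (Fin dW) ℂ) (hρW : IsDensityMatrix ρW)
    (hS : ∀ x, vnEntropy (ptrace2 (U x * (ρW ⊗ₖ outer (φt x)) * (U x)ᴴ))
        = vnEntropy ρW)
    (hW : ∀ x, 0 < freeEnergy kT HW (ptrace2 (U x * (ρW ⊗ₖ outer (φt x)) * (U x)ᴴ))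
        - freeEnergy kT HW ρW) :
    (∀ x, lambdaMin HS < (star (φt x) ⬝ᵥ HS.mulVec (φt x)).re) ∧
    ¬ ((∀ x y, star (φt x) ⬝ᵥ φt y = if x = y then 1 else 0) ∧
        (∀ x, ∃ μ : ℝ, HS.mulVec (φt x) = (μ : ℂ) • φt x)) := by
  have hgap : ∀ x, lambdaMin HS < (star (φt x) ⬝ᵥ HS *ᵥ φt x).re := fun x ↦
    lambdaMin_lt_of_work_pos hHS (hφt x) (hU x) (hUcomm x) hρW (hS x) (hW x)
  refine ⟨hgap, ?_⟩
  rintro ⟨horth, heig⟩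
  choose μ hμ using heig
  have : Nonempty (Fin dS) := Fin.pos_iff_nonempty.mp hdS
  have : Nonempty X := Fintype.card_pos_iff.mp (hcard ▸ hdS)
  let b := basisOfLinearIndependentOfCardEqFinrank
    (linearIndependent_of_star_dotProduct_eq_ite horth) (by rw [hcard, Module.finrank_fin_fun])
  obtain ⟨x, hx⟩ := Module.End.exists_eq_of_hasEigenvalue_of_basis b (f := toLin' HS)
    (μ := fun x ↦ (μ x : ℂ)) (fun x ↦ by simp [b, hμ x]) hHS.hasEigenvalue_lambdaMin
  have := hgap x
  rw [hμ x, dotProduct_smul, hφt x, smul_eq_mul, mul_one, hx, Complex.ofReal_re] at this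
  exact this.false

/-- Impossibility theorem, part 3: invariant weight entropy (Feature 2) plus
strictly positive work extraction for all outcomes (Feature 3) force every
post-measurement state to have energy strictly above the ground state; in
particular the post-measurement states cannot form an orthonormal eigenbasis of
the system Hamiltonian (negating Feature 1). -/
theorem features_two_three_exclude_one
    {dW dS : ℕ} {X : Type*} [Fintype X] [DecidableEq X]
    (hdS : 0 < dS)
    (HW : Matrix (Fin dW) (Fin dW) ℂ) (HS : Matrix (Fin dS) (Fin dS) ℂ)
    (hHW : HW.IsHermitian) (hHS : HS.IsHermitian)
    (kT : ℝ) (hkT : 0 < kT)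
    (φt : X → (Fin dS → ℂ))
    (hcard : Fintype.card X = dS)
    (hφt : ∀ x, star (φt x) ⬝ᵥ φt x = 1)
    (U : X → Matrix (Fin dW × Fin dS) (Fin dW × Fin dS) ℂ)
    (hU : ∀ x, U x ∈ Matrix.unitaryGroup (Fin dW × Fin dS) ℂ)
    (hUcomm : ∀ x, U x * (HW ⊗ₖ (1 : Matrix (Fin dS) (Fin dS) ℂ)
        + (1 : Matrix (Fin dW) (Fin dW) ℂ) ⊗ₖ HS)
      = (HW ⊗ₖ (1 : Matrix (Fin dS) (Fin dS) ℂ)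
        + (1 : Matrix (Fin dW) (Fin dW) ℂ) ⊗ₖ HS) * U x)
    (ρW : Matrix (Fin dW) (Fin dW) ℂ) (hρW : IsDensityMatrix ρW)
    (hS : ∀ x, vnEntropy (ptrace2 (U x * (ρW ⊗ₖ outer (φt x)) * (U x)ᴴ))
        = vnEntropy ρW)
    (hW : ∀ x, 0 < freeEnergy kT HW (ptrace2 (U x * (ρW ⊗ₖ outer (φt x)) * (U x)ᴴ))
        - freeEnergy kT HW ρW) :
    (∀ x, lambdaMin HS < (star (φt x) ⬝ᵥ HS.mulVec (φt x)).re) ∧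
    ¬ ((∀ x y, star (φt x) ⬝ᵥ φt y = if x = y then 1 else 0) ∧
        (∀ x, ∃ μ : ℝ, HS.mulVec (φt x) = (μ : ℂ) • φt x)) :=
  features_two_three_exclude_one_general hdS HW HS hHS kT φt hcard hφt U hU hUcomm ρW hρW hS hW
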